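/- arXiv:1804.11320 — 2 statements merged into one kernel-verified Lean document; each statement's English description precedes it below -/
import Mathlib

section
/- Let F : ℝⁿ → H(m) be continuously differentiable (into Hermitian matrices), f(x) = λ₁(F(x)), φ(y, x) = λ₁(F(x) + F'(x)(y − x)). Then φ is a strict first-order model: for all sequences xₖ → x and yₖ → x there exist εₖ → 0⁺ with f(yₖ) ≤ φ(yₖ, xₖ) + εₖ‖yₖ − xₖ‖. -/
/-!
Weyl's inequality `λ₁ A ≤ λ₁ B + ‖A - B‖` (operator norm, hence up to a constant factor also in the
entrywise norm) holds for Hermitian `A`, `B` because `λ₁` is the maximum of the Rayleigh quotient.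
Applied to `A = F yₖ` and its linearisation `B = F xₖ + F' xₖ (yₖ - xₖ)`, which is Hermitian since
`F'` takes values in the tangent space of the Hermitian matrices, it reduces the claim to
`F yₖ - F xₖ - F' xₖ (yₖ - xₖ) = o(‖yₖ - xₖ‖)`: strict differentiability of the `C¹` map `F`
together with continuity of `F'`.
-/

attribute [local instance] Matrix.normedAddCommGroup Matrix.normedSpace

/-- The largest (supremum of) real eigenvalue(s) of a complex matrix. -/
noncomputable def lambdaMax {m : ℕ} (M : Matrix (Fin m) (Fin m) ℂ) : ℝ :=
  sSup {r : ℝ | ∃ w : Fin m → ℂ, w ≠ 0 ∧ M.mulVec w = (r : ℂ) • w}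

open Filter Topology Asymptotics

theorem HasFDerivAt.isSelfAdjoint_apply {𝕜 E F : Type*} [NontriviallyNormedField 𝕜] [StarRing 𝕜]
    [TrivialStar 𝕜] [NormedAddCommGroup E] [NormedSpace 𝕜 E] [NormedAddCommGroup F]
    [StarAddMonoid F] [NormedSpace 𝕜 F] [StarModule 𝕜 F] [ContinuousStar F]
    {f : E → F} {f' : E →L[𝕜] F} {x : E} (hf : HasFDerivAt f f' x)
    (hsa : ∀ y, IsSelfAdjoint (f y)) (v : E) : IsSelfAdjoint (f' v) := by
  have hstar := hf.star
  simp only [(hsa _).star_eq] at hstar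
  exact congrArg (· v) (hf.unique hstar).symm

theorem isLittleO_sub_sub_fderiv_of_continuousAt {E G : Type*} [NormedAddCommGroup E]
    [NormedSpace ℝ E] [NormedAddCommGroup G] [NormedSpace ℝ G] {F : E → G} {F' : E → E →L[ℝ] G}
    {x : E} (hderiv : ∀ᶠ y in 𝓝 x, HasFDerivAt F (F' y) y) (hcont : ContinuousAt F' x) :
    (fun p : E × E => F p.1 - F p.2 - F' p.2 (p.1 - p.2)) =o[𝓝 (x, x)] fun p => p.1 - p.2 := by
  have hstrict := hasStrictFDerivAt_of_hasFDerivAt_of_continuousAt hderiv hcont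
  have hvar : (fun p : E × E => (F' x - F' p.2) (p.1 - p.2)) =o[𝓝 (x, x)] fun p => p.1 - p.2 := by
    have hsmall : Tendsto (fun p : E × E => ‖F' x - F' p.2‖) (𝓝 (x, x)) (𝓝 0) := by
      rw [← tendsto_zero_iff_norm_tendsto_zero, ← sub_self (F' x)]
      exact tendsto_const_nhds.sub (hcont.comp continuousAt_snd)
    refine isLittleO_iff.2 fun c hc => ?_
    filter_upwards [hsmall.eventually (ge_mem_nhds hc)] with p hp
    exact (F' x - F' p.2).le_of_opNorm_le hp _
  refine (hstrict.isLittleO.add hvar).congr_left fun p => ?_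
  simp only [sub_apply]
  abel

open Matrix ContinuousLinearMap

theorem ContinuousLinearMap.bddAbove_range_rayleighQuotient {𝕜 E : Type*} [RCLike 𝕜]
    [NormedAddCommGroup E] [InnerProductSpace 𝕜 E] (T : E →L[𝕜] E) :
    BddAbove (Set.range fun v : {v : E // v ≠ 0} => T.rayleighQuotient v) :=
  ⟨‖T‖, by rintro _ ⟨v, rfl⟩; exact (abs_le.1 (T.rayleighQuotient_le_norm v)).2⟩

section lambdaMax

variable {m : ℕ}

theorem Matrix.rayleighQuotient_toEuclideanCLM_eq {M : Matrix (Fin m) (Fin m) ℂ} {r : ℝ}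
    {w : Fin m → ℂ} (hw : w ≠ 0) (h : M *ᵥ w = (r : ℂ) • w) :
    (toEuclideanCLM (n := Fin m) (𝕜 := ℂ) M).rayleighQuotient (WithLp.toLp 2 w) = r := by
  have hv : WithLp.toLp 2 w ≠ 0 := by simpa using hw
  rw [rayleighQuotient, reApplyInnerSelf_apply, toEuclideanCLM_toLp, h, WithLp.toLp_smul,
    inner_smul_left, inner_self_eq_norm_sq_to_K]
  simp only [Complex.conj_ofReal, Complex.coe_algebraMap, ← Complex.ofReal_pow, RCLike.mul_re,
    RCLike.re_to_complex, Complex.ofReal_re, RCLike.im_to_complex, Complex.ofReal_im, mul_zero,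
    sub_zero]
  field_simp

theorem Matrix.IsHermitian.lambdaMax_eq_iSup_rayleighQuotient [Nonempty (Fin m)]
    {B : Matrix (Fin m) (Fin m) ℂ} (hB : B.IsHermitian) :
    lambdaMax B = ⨆ v : {v : EuclideanSpace ℂ (Fin m) // v ≠ 0},
      (toEuclideanCLM (n := Fin m) (𝕜 := ℂ) B).rayleighQuotient v := by
  obtain ⟨v, hv⟩ := (isSymmetric_toEuclideanLin_iff.2 hB).hasEigenvalue_iSup_of_finiteDimensional
    |>.exists_hasEigenvector
  refine IsGreatest.csSup_eq ⟨⟨WithLp.ofLp v, by simpa using hv.2, ?_⟩, ?_⟩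
  · exact congrArg WithLp.ofLp hv.apply_eq_smul
  · rintro r ⟨w, hw, h⟩
    rw [← rayleighQuotient_toEuclideanCLM_eq hw h]
    exact le_ciSup (toEuclideanCLM (n := Fin m) (𝕜 := ℂ) B).bddAbove_range_rayleighQuotient
      ⟨WithLp.toLp 2 w, by simpa using hw⟩

theorem Matrix.IsHermitian.lambdaMax_le_add_norm_toEuclideanCLM_sub
    {A B : Matrix (Fin m) (Fin m) ℂ} (hA : A.IsHermitian) (hB : B.IsHermitian) :
    lambdaMax A ≤ lambdaMax B + ‖toEuclideanCLM (n := Fin m) (𝕜 := ℂ) (A - B)‖ := by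
  cases isEmpty_or_nonempty (Fin m)
  · rw [Subsingleton.elim A B]
    exact le_add_of_nonneg_right (norm_nonneg _)
  have : Nonempty {v : EuclideanSpace ℂ (Fin m) // v ≠ 0} :=
    (exists_ne 0).elim fun v hv => ⟨⟨v, hv⟩⟩
  rw [hA.lambdaMax_eq_iSup_rayleighQuotient, hB.lambdaMax_eq_iSup_rayleighQuotient]
  refine ciSup_le fun v => ?_
  rw [show A = B + (A - B) by abel, map_add, rayleighQuotient_add, add_sub_cancel_left]
  gcongr
  · exact le_ciSup (toEuclideanCLM (n := Fin m) (𝕜 := ℂ) B).bddAbove_range_rayleighQuotient v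
  · exact (abs_le.1 (rayleighQuotient_le_norm _ _)).2

theorem Matrix.exists_norm_toEuclideanCLM_le_mul_norm {𝕜 n : Type*} [RCLike 𝕜] [Fintype n]
    [DecidableEq n] : ∃ K : ℝ, 0 ≤ K ∧ ∀ C : Matrix n n 𝕜,
      ‖toEuclideanCLM (n := n) (𝕜 := 𝕜) C‖ ≤ K * ‖C‖ := by
  refine ⟨∑ i, ∑ j, ‖toEuclideanCLM (n := n) (𝕜 := 𝕜) (single i j 1)‖, by positivity,
    fun C => ?_⟩
  have hC : C = ∑ i, ∑ j, C i j • single i j (1 : 𝕜) := by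
    simpa only [smul_single, smul_eq_mul, mul_one] using C.matrix_eq_sum_single
  calc ‖toEuclideanCLM (n := n) (𝕜 := 𝕜) C‖
      = ‖∑ i, ∑ j, C i j • toEuclideanCLM (n := n) (𝕜 := 𝕜) (single i j 1)‖ := by
        conv_lhs => rw [hC]
        simp only [map_sum, map_smul]
    _ ≤ ∑ i, ∑ j, ‖C i j‖ * ‖toEuclideanCLM (n := n) (𝕜 := 𝕜) (single i j 1)‖ :=
        (norm_sum_le _ _).trans <| Finset.sum_le_sum fun i _ =>
          (norm_sum_le _ _).trans_eq <| by simp only [norm_smul]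
    _ ≤ ∑ i, ∑ j, ‖C‖ * ‖toEuclideanCLM (n := n) (𝕜 := 𝕜) (single i j 1)‖ := by
        gcongr
        exact C.norm_entry_le_entrywise_sup_norm
    _ = _ := by simp only [← Finset.mul_sum, mul_comm]

variable (m) in
theorem exists_lambdaMax_le_add_mul_norm_sub :
    ∃ K : ℝ, 0 ≤ K ∧ ∀ A B : Matrix (Fin m) (Fin m) ℂ, A.IsHermitian → B.IsHermitian →
      lambdaMax A ≤ lambdaMax B + K * ‖A - B‖ := by
  obtain ⟨K, hK, hCLM⟩ := exists_norm_toEuclideanCLM_le_mul_norm (n := Fin m) (𝕜 := ℂ)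
  exact ⟨K, hK, fun A B hA hB => (hA.lambdaMax_le_add_norm_toEuclideanCLM_sub hB).trans
    (by gcongr; exact hCLM _)⟩

end lambdaMax

/-- Strictness of the eigenvalue model: for C¹ Hermitian-valued F, with
f(x) = λ₁(F(x)) and φ(y,x) = λ₁(F(x) + F'(x)(y-x)), for all sequences
xₖ → x, yₖ → x there exist εₖ → 0⁺ with
f(yₖ) ≤ φ(yₖ, xₖ) + εₖ‖yₖ − xₖ‖. -/
theorem stmt10 (n m : ℕ)
    (F : EuclideanSpace ℝ (Fin n) → Matrix (Fin m) (Fin m) ℂ)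
    (F' : EuclideanSpace ℝ (Fin n) →
      (EuclideanSpace ℝ (Fin n) →L[ℝ] Matrix (Fin m) (Fin m) ℂ))
    (hderiv : ∀ x, HasFDerivAt F (F' x) x)
    (hcont : Continuous F')
    (hherm : ∀ x, (F x).IsHermitian)
    (f : EuclideanSpace ℝ (Fin n) → ℝ) (hf : ∀ x, f x = lambdaMax (F x))
    (φ : EuclideanSpace ℝ (Fin n) → EuclideanSpace ℝ (Fin n) → ℝ)
    (hφ : ∀ y x, φ y x = lambdaMax (F x + F' x (y - x)))
    (x : EuclideanSpace ℝ (Fin n)) (xs ys : ℕ → EuclideanSpace ℝ (Fin n))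
    (hx : Filter.Tendsto xs Filter.atTop (nhds x))
    (hy : Filter.Tendsto ys Filter.atTop (nhds x)) :
    ∃ ε : ℕ → ℝ, Filter.Tendsto ε Filter.atTop (nhds 0) ∧
      ∀ k, 0 ≤ ε k ∧ f (ys k) ≤ φ (ys k) (xs k) + ε k * ‖ys k - xs k‖ := by
  obtain ⟨K, hK, hweyl⟩ := exists_lambdaMax_le_add_mul_norm_sub m
  set R := fun k => F (ys k) - F (xs k) - F' (xs k) (ys k - xs k)
  have hR : Tendsto (fun k => ‖R k‖ / ‖ys k - xs k‖) atTop (𝓝 0) :=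
    ((isLittleO_sub_sub_fderiv_of_continuousAt (.of_forall hderiv) hcont.continuousAt).comp_tendsto
      (hy.prodMk_nhds hx)).norm_left.norm_right.tendsto_div_nhds_zero
  refine ⟨fun k => K * (‖R k‖ / ‖ys k - xs k‖), by simpa using hR.const_mul K,
    fun k => ⟨by positivity, ?_⟩⟩
  have hlin : (F (xs k) + F' (xs k) (ys k - xs k)).IsHermitian :=
    (hherm _).add ((hderiv _).isSelfAdjoint_apply hherm _)
  calc f (ys k) ≤ φ (ys k) (xs k) + K * ‖R k‖ := by
        rw [hf, hφ, show R k = F (ys k) - (F (xs k) + F' (xs k) (ys k - xs k)) from sub_sub _ _ _]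
        exact hweyl _ _ (hherm _) hlin
    _ = φ (ys k) (xs k) + K * (‖R k‖ / ‖ys k - xs k‖) * ‖ys k - xs k‖ := by
        rw [mul_assoc, div_mul_cancel_of_imp]
        intro h
        simp [R, sub_eq_zero.1 (norm_eq_zero.1 h)]
end

section
/- Let φ, (φₖ) be convex functions on ℝⁿ with φₖ ≤ φ, and suppose for each k that gₖ is a subgradient of φₖ₊₁ at yᵏ with φₖ₊₁(yᵏ) = φ(yᵏ). If the gₖ are bounded, yᵏ⁺¹ − yᵏ → 0, and φₖ₊₁(yᵏ⁺¹) − φₖ(yᵏ) → 0, then φ(yᵏ) − φₖ(yᵏ) → 0. -/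
/-!
Since `φₖ₊₁(yᵏ) = φ(yᵏ)` and `gₖ` is a subgradient of `φₖ₊₁` at `yᵏ`,
`0 ≤ φ(yᵏ) - φₖ(yᵏ) ≤ (φₖ₊₁(yᵏ⁺¹) - φₖ(yᵏ)) - ⟪gₖ, yᵏ⁺¹ - yᵏ⟫`,
and the right-hand side tends to `0` because the `gₖ` are bounded and `yᵏ⁺¹ - yᵏ → 0`.
-/

open Filter Topology
open scoped InnerProductSpace

section

variable {E : Type*} [NormedAddCommGroup E] [InnerProductSpace ℝ E]

def IsSubgradientAt (f : E → ℝ) (x g : E) : Prop :=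
  ∀ h, ⟪g, h⟫_ℝ ≤ f (x + h) - f x

theorem IsSubgradientAt.le_sub_inner {f : E → ℝ} {x g : E} (hg : IsSubgradientAt f x g)
    (z : E) : f x ≤ f z - ⟪g, z - x⟫_ℝ := by
  have := hg (z - x)
  rw [add_sub_cancel] at this
  linarith

theorem tendsto_inner_zero_of_norm_le {ι : Type*} {l : Filter ι} {g v : ι → E} {C : ℝ}
    (hg : ∀ i, ‖g i‖ ≤ C) (hv : Tendsto v l (𝓝 0)) :
    Tendsto (fun i => ⟪g i, v i⟫_ℝ) l (𝓝 0) :=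
  squeeze_zero_norm
    (fun i => (norm_inner_le_norm _ _).trans (mul_le_mul_of_nonneg_right (hg i) (norm_nonneg _)))
    (by simpa using hv.norm.const_mul C)

theorem tendsto_sub_of_isSubgradientAt_of_eq {φ : E → ℝ} {φk : ℕ → E → ℝ} {y g : ℕ → E}
    {C : ℝ} (hle : ∀ k y, φk k y ≤ φ y) (hsub : ∀ k, IsSubgradientAt (φk (k + 1)) (y k) (g k))
    (hexact : ∀ k, φk (k + 1) (y k) = φ (y k)) (hg : ∀ k, ‖g k‖ ≤ C)
    (hydiff : Tendsto (fun k => y (k + 1) - y k) atTop (𝓝 0))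
    (hval : Tendsto (fun k => φk (k + 1) (y (k + 1)) - φk k (y k)) atTop (𝓝 0)) :
    Tendsto (fun k => φ (y k) - φk k (y k)) atTop (𝓝 0) := by
  have hupper : Tendsto (fun k => (φk (k + 1) (y (k + 1)) - φk k (y k)) -
      ⟪g k, y (k + 1) - y k⟫_ℝ) atTop (𝓝 0) := by
    simpa using hval.sub (tendsto_inner_zero_of_norm_le hg hydiff)
  refine tendsto_of_tendsto_of_tendsto_of_le_of_le tendsto_const_nhds hupper
    (fun k => sub_nonneg.2 (hle k (y k))) (fun k => ?_)
  have := (hsub k).le_sub_inner (y (k + 1))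
  rw [hexact k] at this
  linarith

end

theorem stmt15_general (n : ℕ) (φ : EuclideanSpace ℝ (Fin n) → ℝ)
    (φk : ℕ → EuclideanSpace ℝ (Fin n) → ℝ)
    (hφkle : ∀ k y, φk k y ≤ φ y)
    (y g : ℕ → EuclideanSpace ℝ (Fin n))
    (hsub : ∀ k (h : EuclideanSpace ℝ (Fin n)),
      (inner ℝ (g k) h : ℝ) ≤ φk (k + 1) (y k + h) - φk (k + 1) (y k))
    (hexact : ∀ k, φk (k + 1) (y k) = φ (y k))
    (hgbdd : ∃ Cg : ℝ, ∀ k, ‖g k‖ ≤ Cg)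
    (hydiff : Filter.Tendsto (fun k => y (k + 1) - y k) Filter.atTop (nhds 0))
    (hval : Filter.Tendsto (fun k => φk (k + 1) (y (k + 1)) - φk k (y k))
      Filter.atTop (nhds 0)) :
    Filter.Tendsto (fun k => φ (y k) - φk k (y k)) Filter.atTop (nhds 0) := by
  obtain ⟨C, hC⟩ := hgbdd
  exact tendsto_sub_of_isSubgradientAt_of_eq hφkle hsub hexact hC hydiff hval

/-- Cutting-plane exactness in the limit: if φₖ ≤ φ are convex, gₖ is a
subgradient of φₖ₊₁ at yᵏ with φₖ₊₁(yᵏ) = φ(yᵏ), the gₖ are bounded,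
yᵏ⁺¹ - yᵏ → 0 and φₖ₊₁(yᵏ⁺¹) - φₖ(yᵏ) → 0, then φ(yᵏ) - φₖ(yᵏ) → 0. -/
theorem stmt15 (n : ℕ) (φ : EuclideanSpace ℝ (Fin n) → ℝ)
    (hφ : ConvexOn ℝ Set.univ φ)
    (φk : ℕ → EuclideanSpace ℝ (Fin n) → ℝ)
    (hφkconv : ∀ k, ConvexOn ℝ Set.univ (φk k))
    (hφkle : ∀ k y, φk k y ≤ φ y)
    (y g : ℕ → EuclideanSpace ℝ (Fin n))
    (hsub : ∀ k (h : EuclideanSpace ℝ (Fin n)),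
      (inner ℝ (g k) h : ℝ) ≤ φk (k + 1) (y k + h) - φk (k + 1) (y k))
    (hexact : ∀ k, φk (k + 1) (y k) = φ (y k))
    (hgbdd : ∃ Cg : ℝ, ∀ k, ‖g k‖ ≤ Cg)
    (hydiff : Filter.Tendsto (fun k => y (k + 1) - y k) Filter.atTop (nhds 0))
    (hval : Filter.Tendsto (fun k => φk (k + 1) (y (k + 1)) - φk k (y k))
      Filter.atTop (nhds 0)) :
    Filter.Tendsto (fun k => φ (y k) - φk k (y k)) Filter.atTop (nhds 0) :=
  stmt15_general n φ φk hφkle y g hsub hexact hgbdd hydiff hval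
end
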